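/- arXiv:2305.04784 — 10 statements merged into one kernel-verified Lean document; each statement's English description precedes it below -/
import Mathlib

section
/- Given a nonzero φ ∈ W, let L ⊆ K^s be the span of {u^{(i)} : i ∉ supp(φ)}. Then L is a proper subspace of K^s and u^{(i)} ∉ L for all i ∈ supp(φ). -/
/-- Given a nonzero φ ∈ W = span{φ_1,…,φ_s}, the span L of
{u^{(i)} : i ∉ supp φ} is a proper subspace of K^s and u^{(i)} ∉ L for all
i ∈ supp φ. -/
theorem stmt2 {K E : Type*} [Field K] {s : ℕ}
    (φ : Fin s → (E → K)) (hφ : LinearIndependent K φ)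
    (u : E → (Fin s → K)) (hu : ∀ j i, u j i = φ i j)
    (w : E → K) (hw : w ∈ Submodule.span K (Set.range φ)) (hw0 : w ≠ 0) :
    Submodule.span K (u '' (Function.support w)ᶜ) ≠ ⊤ ∧
      ∀ i ∈ Function.support w, u i ∉ Submodule.span K (u '' (Function.support w)ᶜ) := by
  obtain ⟨c, hc⟩ := (Submodule.mem_span_range_iff_exists_fun K).mp hw
  -- the linear functional v ↦ ∑ i, c i * v i
  let f : (Fin s → K) →ₗ[K] K :=
    { toFun := fun v => ∑ i, c i * v i
      map_add' := fun x y => by simp [mul_add, Finset.sum_add_distrib]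
      map_smul' := fun r x => by
        simp [Finset.mul_sum, mul_left_comm]
  }
  have key : ∀ j, f (u j) = w j := by
    intro j
    have := congrFun hc j
    simp only [Finset.sum_apply, Pi.smul_apply, smul_eq_mul] at this
    simpa [f, hu] using this
  have hle : Submodule.span K (u '' (Function.support w)ᶜ) ≤ LinearMap.ker f := by
    rw [Submodule.span_le]
    rintro v ⟨j, hj, rfl⟩
    simp only [SetLike.mem_coe, LinearMap.mem_ker, key]
    simpa [Function.mem_support] using hj
  have h2 : ∀ i ∈ Function.support w,
      u i ∉ Submodule.span K (u '' (Function.support w)ᶜ) := by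
    intro i hi hmem
    exact hi (by simpa [key] using hle hmem)
  refine ⟨?_, h2⟩
  intro htop
  obtain ⟨i, hi⟩ := Function.ne_iff.mp hw0
  exact h2 i hi (htop ▸ Submodule.mem_top)
end

section
/- A subset C ⊆ E is a minimal nonempty support of an element of W if and only if the span L of {u^{(i)} : i ∉ C} has dimension s−1 in K^s and u^{(i)} ∉ L for all i ∈ C. -/
/-!
A functional `f` on `K^s` gives the element `j ↦ f (u j)` of `W`; with the coordinate functionals
this yields the `φ i`, so it is an isomorphism of the dual of `K^s` onto `W`. The elements of `W`
vanishing outside `C` correspond to the functionals annihilating `L = span {u i | i ∉ C}`, a space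
of dimension `s - dim L`. Now `C` is a minimal support exactly when this space is a line containing,
for every `i ∈ C`, an element nonzero at `i`; that is, some functional annihilating `L` is nonzero
at `u i`, which means `u i ∉ L`.
-/

open Module Function

namespace Submodule

variable {K E : Type*} [Field K]

def vanishingOutside (W : Submodule K (E → K)) (C : Set E) : Submodule K (E → K) :=
  W ⊓ pi Cᶜ fun _ => ⊥

theorem mem_vanishingOutside {W : Submodule K (E → K)} {C : Set E} {w : E → K} :
    w ∈ W.vanishingOutside C ↔ w ∈ W ∧ support w ⊆ C := by
  rw [vanishingOutside, mem_inf, mem_pi, support_subset_iff']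
  simp only [Set.mem_compl_iff, mem_bot]

def IsMinimalSupport (W : Submodule K (E → K)) (C : Set E) : Prop :=
  ∃ w ∈ W, w ≠ 0 ∧ support w = C ∧
    ∀ w' ∈ W, w' ≠ 0 → support w' ⊆ C → support w' = C

theorem isMinimalSupport_iff {W : Submodule K (E → K)} {C : Set E} :
    W.IsMinimalSupport C ↔
      finrank K (W.vanishingOutside C) = 1 ∧ ∀ i ∈ C, ∃ w ∈ W.vanishingOutside C, w i ≠ 0 := by
  constructor
  · rintro ⟨w, hwW, hw0, hwC, hmin⟩
    have hw : w ∈ W.vanishingOutside C := mem_vanishingOutside.mpr ⟨hwW, hwC.le⟩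
    obtain ⟨i₀, hi₀⟩ := support_nonempty_iff.mpr hw0
    -- `w' - c • w` vanishes at `i₀ ∈ C`, so by minimality it is zero
    have hspan : W.vanishingOutside C = K ∙ w := by
      refine le_antisymm (fun w' hw' => mem_span_singleton.mpr ⟨w' i₀ / w i₀, ?_⟩)
        (span_singleton_le_iff_mem _ _ |>.mpr hw)
      have hdiff : w' - (w' i₀ / w i₀) • w ∈ W.vanishingOutside C := sub_mem hw' (smul_mem _ _ hw)
      by_contra hne
      obtain ⟨hdiffW, hdiffC⟩ := mem_vanishingOutside.mp hdiff
      have := hmin _ hdiffW (sub_ne_zero.mpr (Ne.symm hne)) hdiffC ▸ hwC ▸ hi₀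
      simp [div_mul_cancel₀ _ (mem_support.mp hi₀)] at this
    exact ⟨hspan ▸ finrank_span_singleton hw0, fun i hi => ⟨w, hw, mem_support.mp (hwC ▸ hi)⟩⟩
  · rintro ⟨hrank, hC⟩
    have : FiniteDimensional K (W.vanishingOutside C) := finite_of_finrank_eq_succ hrank
    obtain ⟨w, hw, hw0⟩ := exists_mem_ne_zero_of_ne_bot fun h => by
      rw [finrank_eq_zero.mpr h] at hrank; exact zero_ne_one hrank
    have hspan : W.vanishingOutside C = K ∙ w :=
      (eq_of_le_of_finrank_le ((span_singleton_le_iff_mem _ _).mpr hw)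
        (by rw [hrank, finrank_span_singleton hw0])).symm
    obtain ⟨hwW, hwC⟩ := mem_vanishingOutside.mp hw
    have hsupp : support w = C := by
      refine hwC.antisymm fun i hi => ?_
      obtain ⟨w', hw', hw'i⟩ := hC i hi
      obtain ⟨c, rfl⟩ := mem_span_singleton.mp (hspan ▸ hw')
      exact right_ne_zero_of_mul hw'i
    refine ⟨w, hwW, hw0, hsupp, fun w' hw'W hw'0 hw'C => ?_⟩
    obtain ⟨c, rfl⟩ := mem_span_singleton.mp (hspan ▸ mem_vanishingOutside.mpr ⟨hw'W, hw'C⟩)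
    rw [support_const_smul_of_ne_zero c w (left_ne_zero_of_smul hw'0), hsupp]

end Submodule

open Submodule

section EvalFamily

variable {K V E : Type*} [Field K] [AddCommGroup V] [Module K V]

variable (K) in
def evalFamily (u : E → V) : Dual K V →ₗ[K] (E → K) :=
  LinearMap.pi fun j => Dual.eval K V (u j)

@[simp]
theorem evalFamily_apply (u : E → V) (f : Dual K V) (j : E) : evalFamily K u f j = f (u j) :=
  rfl

theorem support_evalFamily_subset_iff {u : E → V} {C : Set E} {f : Dual K V} :
    support (evalFamily K u f) ⊆ C ↔ f ∈ (span K (u '' Cᶜ)).dualAnnihilator := by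
  simp_rw [support_subset_iff', mem_dualAnnihilator, ← LinearMap.mem_ker, ← SetLike.le_def,
    span_le, Set.image_subset_iff]
  rfl

theorem vanishingOutside_range_evalFamily (u : E → V) (C : Set E) :
    (LinearMap.range (evalFamily K u)).vanishingOutside C =
      (span K (u '' Cᶜ)).dualAnnihilator.map (evalFamily K u) := by
  ext w
  simp only [mem_vanishingOutside, LinearMap.mem_range, mem_map]
  constructor
  · rintro ⟨⟨f, rfl⟩, hf⟩
    exact ⟨f, support_evalFamily_subset_iff.mp hf, rfl⟩
  · rintro ⟨f, hf, rfl⟩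
    exact ⟨⟨f, rfl⟩, support_evalFamily_subset_iff.mpr hf⟩

theorem exists_mem_vanishingOutside_range_evalFamily_apply_ne_zero_iff (u : E → V) (C : Set E)
    (i : E) :
    (∃ w ∈ (LinearMap.range (evalFamily K u)).vanishingOutside C, w i ≠ 0) ↔
      u i ∉ span K (u '' Cᶜ) := by
  rw [vanishingOutside_range_evalFamily, ← Subspace.forall_mem_dualAnnihilator_apply_eq_zero_iff]
  simp

variable [FiniteDimensional K V]

theorem finrank_vanishingOutside_range_evalFamily {u : E → V} (hu : Injective (evalFamily K u))
    (C : Set E) :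
    finrank K ((LinearMap.range (evalFamily K u)).vanishingOutside C) =
      finrank K V - finrank K (span K (u '' Cᶜ)) := by
  rw [vanishingOutside_range_evalFamily, ← (equivMapOfInjective _ hu _).finrank_eq,
    ← Subspace.finrank_add_finrank_dualAnnihilator_eq (span K (u '' Cᶜ)), Nat.add_sub_cancel_left]

theorem isMinimalSupport_range_evalFamily_iff (hV : 0 < finrank K V) {u : E → V}
    (hu : Injective (evalFamily K u)) (C : Set E) :
    (LinearMap.range (evalFamily K u)).IsMinimalSupport C ↔
      finrank K (span K (u '' Cᶜ)) = finrank K V - 1 ∧ ∀ i ∈ C, u i ∉ span K (u '' Cᶜ) := by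
  simp_rw [isMinimalSupport_iff, finrank_vanishingOutside_range_evalFamily hu,
    exists_mem_vanishingOutside_range_evalFamily_apply_ne_zero_iff]
  have := (span K (u '' Cᶜ)).finrank_le
  exact and_congr_left' (by omega)

end EvalFamily

/-- C ⊆ E is a minimal nonempty support of an element of
W = span{φ_1,…,φ_s} (s ≥ 1) iff the span L of {u^{(i)} : i ∉ C} has
dimension s−1 in K^s and u^{(i)} ∉ L for all i ∈ C. -/
theorem stmt3 {K E : Type*} [Field K] {s : ℕ} (hs : 0 < s)
    (φ : Fin s → (E → K)) (hφ : LinearIndependent K φ)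
    (u : E → (Fin s → K)) (hu : ∀ j i, u j i = φ i j)
    (C : Set E) :
    (∃ w ∈ Submodule.span K (Set.range φ), w ≠ 0 ∧ Function.support w = C ∧
        ∀ w' ∈ Submodule.span K (Set.range φ), w' ≠ 0 →
          Function.support w' ⊆ C → Function.support w' = C) ↔
      (Module.finrank K (Submodule.span K (u '' Cᶜ)) = s - 1 ∧
        ∀ i ∈ C, u i ∉ Submodule.span K (u '' Cᶜ)) := by
  set b := (Pi.basisFun K (Fin s)).dualBasis
  have hφb : evalFamily K u ∘ b = φ := by
    ext i j
    simp [b, hu]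
  have hrange : LinearMap.range (evalFamily K u) = span K (Set.range φ) := by
    rw [← hφb, Set.range_comp, ← map_span, b.span_eq, Submodule.map_top]
  have hinj : Injective (evalFamily K u) :=
    LinearMap.injective_of_linearIndependent b.span_eq (hφb ▸ hφ)
  have := isMinimalSupport_range_evalFamily_iff (by rwa [finrank_fin_fun]) hinj C
  rwa [hrange, finrank_fin_fun] at this
end

section
/- For every nonzero φ ∈ W and every z ∈ supp(φ), there exists a minimal nonempty support C of an element of W such that z ∈ C ⊆ supp(φ). -/
/-!
Among the supports `C` of elements of `W` with `z ∈ C ⊆ supp φ`, take one for which the subspace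
of `W` supported in `C` has least dimension; this dimension is strictly monotone in `C`, so `C` is
inclusion-minimal among such supports. It is then a minimal support outright: a nonzero `w ∈ W`
with `supp w ⊊ C` could be used, after subtracting a multiple of it that kills one point of
`supp w` but not `z`, to produce a smaller support still containing `z`.
-/

open Function Module

section

variable {K E : Type*} [Field K]

variable (K) in
def supportedIn (S : Set E) : Submodule K (E → K) where
  carrier := {f | support f ⊆ S}
  add_mem' {f g} hf hg := (support_add f g).trans (Set.union_subset hf hg)
  zero_mem' := by simp
  smul_mem' c f hf := (support_const_smul_subset c f).trans hf

@[simp]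
lemma mem_supportedIn {S : Set E} {f : E → K} : f ∈ supportedIn K S ↔ support f ⊆ S := Iff.rfl

lemma strictMonoOn_finrank_inf_supportedIn (W : Submodule K (E → K)) [FiniteDimensional K W] :
    StrictMonoOn (fun S => finrank K ↥(W ⊓ supportedIn K S)) {S | ∃ f ∈ W, support f = S} := by
  rintro S - T ⟨f, hfW, rfl⟩ hST
  have : FiniteDimensional K ↥(W ⊓ supportedIn K (support f)) :=
    Submodule.finiteDimensional_of_le inf_le_left
  refine Submodule.finrank_lt_finrank_of_lt (lt_of_le_of_ne ?_ fun h => ?_)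
  · exact inf_le_inf_left W fun g hg => (mem_supportedIn.1 hg).trans hST.subset
  · have hf : f ∈ W ⊓ supportedIn K S := h ▸ ⟨hfW, mem_supportedIn.2 subset_rfl⟩
    exact hST.not_subset (mem_supportedIn.1 hf.2)

lemma exists_mem_support_ssubset {W : Submodule K (E → K)} {f w : E → K} (hfW : f ∈ W)
    (hwW : w ∈ W) (hw0 : w ≠ 0) (hwf : support w ⊂ support f) {z : E} (hz : z ∈ support f) :
    ∃ g ∈ W, z ∈ support g ∧ support g ⊂ support f := by
  by_cases hzw : z ∈ support w
  · exact ⟨w, hwW, hzw, hwf⟩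
  obtain ⟨y, hy⟩ := support_nonempty_iff.2 hw0
  refine ⟨f - (f y / w y) • w, W.sub_mem hfW (W.smul_mem _ hwW), ?_, ?_⟩
  · simpa [notMem_support.1 hzw] using hz
  have hsub : support (f - (f y / w y) • w) ⊆ support f :=
    (support_sub _ _).trans <|
      Set.union_subset subset_rfl ((support_const_smul_subset _ w).trans hwf.subset)
  refine (Set.ssubset_iff_of_subset hsub).2 ⟨y, hwf.subset hy, ?_⟩
  simp [div_mul_cancel₀ _ (mem_support.1 hy)]

end

theorem stmt4_general {K E : Type*} [Field K] (W : Submodule K (E → K))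
    (hfin : FiniteDimensional K W)
    (φ : E → K) (hφW : φ ∈ W)
    (z : E) (hz : z ∈ Function.support φ) :
    ∃ C : Set E,
      (∃ w ∈ W, w ≠ 0 ∧ Function.support w = C ∧
        ∀ w' ∈ W, w' ≠ 0 → Function.support w' ⊆ C → Function.support w' = C) ∧
      z ∈ C ∧ C ⊆ Function.support φ := by
  let P : Set E → Prop := fun C => (∃ f ∈ W, support f = C) ∧ z ∈ C ∧ C ⊆ support φ
  obtain ⟨C, hC⟩ := exists_minimalFor_of_wellFoundedLT P
    (fun S => finrank K ↥(W ⊓ supportedIn K S)) ⟨_, ⟨φ, hφW, rfl⟩, hz, subset_rfl⟩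
  have hmin : Minimal P C :=
    hC.minimal_of_strictMonoOn ((strictMonoOn_finrank_inf_supportedIn W).mono fun _ hS => hS.1)
  obtain ⟨⟨f, hfW, rfl⟩, hzf, hfφ⟩ := hmin.prop
  refine ⟨_, ⟨f, hfW, ?_, rfl, fun w hwW hw0 hwf => ?_⟩, hzf, hfφ⟩
  · rintro rfl
    simp at hzf
  by_contra hne
  obtain ⟨g, hgW, hzg, hgf⟩ := exists_mem_support_ssubset hfW hwW hw0 (hwf.ssubset_of_ne hne) hzf
  exact hgf.not_subset (hmin.2 ⟨⟨g, hgW, rfl⟩, hzg, hgf.subset.trans hfφ⟩ hgf.subset)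

/-- For every nonzero φ ∈ W and every z ∈ supp φ there is a
minimal nonempty support C of an element of W with z ∈ C ⊆ supp φ. -/
theorem stmt4 {K E : Type*} [Field K] (W : Submodule K (E → K))
    (hW : W ≠ ⊥) (hfin : FiniteDimensional K W)
    (φ : E → K) (hφW : φ ∈ W) (hφ : φ ≠ 0)
    (z : E) (hz : z ∈ Function.support φ) :
    ∃ C : Set E,
      (∃ w ∈ W, w ≠ 0 ∧ Function.support w = C ∧
        ∀ w' ∈ W, w' ≠ 0 → Function.support w' ⊆ C → Function.support w' = C) ∧
      z ∈ C ∧ C ⊆ Function.support φ :=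
  stmt4_general W hfin φ hφW z hz
end

section
/- For the collection C(W) of minimal supports of W, the family I of C(W)-independent sets (subsets of E containing no member of C(W)) satisfies: for all I ∈ I and I ⊆ X ⊆ E, the set {I' ∈ I : I ⊆ I' ⊆ X} has a maximal element. -/
/-- `IsCircuit W C` : C is a minimal nonempty support of an element of W. -/
def IsCircuit {K E : Type*} [Field K] (W : Submodule K (E → K)) (C : Set E) : Prop :=
  ∃ w ∈ W, w ≠ 0 ∧ Function.support w = C ∧
    ∀ w' ∈ W, w' ≠ 0 → Function.support w' ⊆ C → Function.support w' = C

/-- The subspace of elements of `W` supported inside `S`. -/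
def suppLE {K E : Type*} [Field K] (W : Submodule K (E → K)) (S : Set E) :
    Submodule K W where
  carrier := {w | Function.support (w : E → K) ⊆ S}
  add_mem' := by
    intro a b ha hb
    refine subset_trans ?_ (Set.union_subset ha hb)
    simpa using Function.support_add (a : E → K) (b : E → K)
  zero_mem' := by simp
  smul_mem' := by
    intro c a ha
    refine Set.Subset.trans ?_ ha
    simpa using Function.support_smul_subset_right c (a : E → K)

lemma mem_suppLE {K E : Type*} [Field K] {W : Submodule K (E → K)} {S : Set E} {w : W} :
    w ∈ suppLE W S ↔ Function.support (w : E → K) ⊆ S := Iff.rfl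

lemma suppLE_mono {K E : Type*} [Field K] (W : Submodule K (E → K)) {S S' : Set E}
    (h : S ⊆ S') : suppLE W S ≤ suppLE W S' :=
  fun _ hw => Set.Subset.trans hw h

lemma exists_circuit {K E : Type*} [Field K] (W : Submodule K (E → K))
    [FiniteDimensional K W] (w : W) (hw : w ≠ 0) :
    ∃ C, IsCircuit W C ∧ C ⊆ Function.support (w : E → K) := by
  classical
  have hP : ∃ n, ∃ v : W, v ≠ 0 ∧
      Function.support (v : E → K) ⊆ Function.support (w : E → K) ∧
      Module.finrank K (suppLE W (Function.support (v : E → K))) = n :=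
    ⟨_, w, hw, subset_rfl, rfl⟩
  obtain ⟨v, hv0, hvw, hvrank⟩ := Nat.find_spec hP
  have hv0' : (v : E → K) ≠ 0 := by
    simpa using Subtype.coe_injective.ne hv0
  refine ⟨Function.support (v : E → K), ⟨v, v.2, hv0', rfl, ?_⟩, hvw⟩
  intro w' hw' hw'0 hsub
  by_contra hne
  have hvnot : ¬ Function.support (v : E → K) ⊆ Function.support w' := by
    intro h
    exact hne (subset_antisymm hsub h)
  have hlt : suppLE W (Function.support w') < suppLE W (Function.support (v : E → K)) := by
    refine lt_of_le_of_ne (suppLE_mono W hsub) ?_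
    intro h
    have hvmem : v ∈ suppLE W (Function.support (v : E → K)) :=
      mem_suppLE.mpr (Set.Subset.refl _)
    rw [← h] at hvmem
    exact hvnot (mem_suppLE.mp hvmem)
  have hw'W : (⟨w', hw'⟩ : W) ≠ 0 := by
    intro h
    exact hw'0 (by simpa using congrArg Subtype.val h)
  have hmin := Nat.find_min' hP
    ⟨(⟨w', hw'⟩ : W), hw'W, Set.Subset.trans hsub hvw, rfl⟩
  have hrank := Submodule.finrank_lt_finrank_of_lt hlt
  have hcoe : Function.support (((⟨w', hw'⟩ : W) : E → K)) = Function.support w' := rfl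
  rw [hcoe] at hmin
  omega

lemma indep_iff {K E : Type*} [Field K] (W : Submodule K (E → K))
    [FiniteDimensional K W] (S : Set E) :
    (∀ C, IsCircuit W C → ¬ C ⊆ S) ↔ suppLE W S = ⊥ := by
  constructor
  · intro h
    by_contra hne
    obtain ⟨v, hv, hv0⟩ := Submodule.exists_mem_ne_zero_of_ne_bot hne
    obtain ⟨C, hC, hCsub⟩ := exists_circuit W v hv0
    exact h C hC (subset_trans hCsub hv)
  · intro h C hC hCS
    obtain ⟨w, hwW, hw0, hwsupp, _⟩ := hC
    have : (⟨w, hwW⟩ : W) ∈ suppLE W S := by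
      rw [mem_suppLE]
      exact hwsupp ▸ hCS
    rw [h, Submodule.mem_bot] at this
    exact hw0 (by simpa using congrArg Subtype.val this)

/-- for the independence system of the circuits C(W), every
independent set I with I ⊆ X ⊆ E extends to a maximal independent subset of X
containing I. -/
theorem stmt7 {K E : Type*} [Field K] (W : Submodule K (E → K))
    (hW : W ≠ ⊥) (hfin : FiniteDimensional K W)
    (I X : Set E) (hI : ∀ C, IsCircuit W C → ¬ C ⊆ I) (hIX : I ⊆ X) :
    ∃ I', Maximal (fun J => (∀ C, IsCircuit W C → ¬ C ⊆ J) ∧ I ⊆ J ∧ J ⊆ X) I' := by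
  classical
  have hAI : suppLE W I = ⊥ := (indep_iff W I).mp hI
  -- Step 1: find a finite T₀ ⊆ X \ I with suppLE W (X \ T₀) = ⊥,
  -- by minimizing the finrank.
  have hP1 : ∃ n, ∃ T : Finset E, ↑T ⊆ X \ I ∧
      Module.finrank K (suppLE W (X \ ↑T)) = n :=
    ⟨_, ∅, by simp, rfl⟩
  obtain ⟨T₀, hT₀sub, hT₀rank⟩ := Nat.find_spec hP1
  have hT₀bot : suppLE W (X \ ↑T₀) = ⊥ := by
    by_contra hne
    obtain ⟨v, hv, hv0⟩ := Submodule.exists_mem_ne_zero_of_ne_bot hne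
    -- supp v ⊆ X \ T₀ but supp v ⊄ I, so pick e ∈ supp v \ I
    have hnotI : ¬ Function.support (v : E → K) ⊆ I := by
      intro h
      exact hv0 (by simpa [hAI, Submodule.mem_bot] using (mem_suppLE.mpr h : v ∈ suppLE W I))
    obtain ⟨e, heS, heI⟩ := Set.not_subset.mp hnotI
    have heXT := hv heS
    have hlt : suppLE W (X \ ↑(insert e T₀)) < suppLE W (X \ ↑T₀) := by
      refine lt_of_le_of_ne (suppLE_mono W ?_) ?_
      · intro x hx
        simp only [Finset.coe_insert, Set.mem_diff, Set.mem_insert_iff] at hx ⊢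
        exact ⟨hx.1, fun h => hx.2 (Or.inr h)⟩
      · intro h
        have hv' : v ∈ suppLE W (X \ ↑(insert e T₀)) := h ▸ hv
        have := hv' heS
        simp at this
      -- done
    have hmin := Nat.find_min' hP1
      ⟨insert e T₀, by
        intro x hx
        simp only [Finset.coe_insert, Set.mem_insert_iff] at hx
        rcases hx with rfl | hx
        · exact ⟨heXT.1, heI⟩
        · exact hT₀sub hx, rfl⟩
    have hrank := Submodule.finrank_lt_finrank_of_lt hlt
    omega
  -- Step 2: among finite T with suppLE W (X \ T) = ⊥, pick one of minimal card.
  have hP2 : ∃ n, ∃ T : Finset E, ↑T ⊆ X \ I ∧ suppLE W (X \ ↑T) = ⊥ ∧ T.card = n :=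
    ⟨_, T₀, hT₀sub, hT₀bot, rfl⟩
  obtain ⟨T₁, hT₁sub, hT₁bot, hT₁card⟩ := Nat.find_spec hP2
  refine ⟨X \ ↑T₁, ⟨(indep_iff W _).mpr hT₁bot, ?_, Set.diff_subset⟩, ?_⟩
  · intro x hx
    exact ⟨hIX hx, fun h => (hT₁sub h).2 hx⟩
  · rintro J ⟨hJindep, hIJ, hJX⟩ hsub
    by_contra hnot
    obtain ⟨e, heJ, heI'⟩ := Set.not_subset.mp hnot
    have heT₁ : e ∈ T₁ := by
      by_contra h
      exact heI' ⟨hJX heJ, h⟩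
    -- T' := elements of T₁ not in J; then X \ T' = J
    set T' : Finset E := T₁.filter (fun x => x ∉ J) with hT'def
    have hXT' : X \ ↑T' = J := by
      ext x
      simp only [Set.mem_diff, hT'def, Finset.coe_filter, Set.mem_setOf_eq,
        Finset.mem_coe, Finset.mem_filter, not_and, not_not]
      constructor
      · rintro ⟨hxX, hx⟩
        by_cases hxT : x ∈ T₁
        · exact hx hxT
        · exact hsub ⟨hxX, hxT⟩
      · intro hxJ
        exact ⟨hJX hxJ, fun _ => hxJ⟩
    have hT'bot : suppLE W (X \ ↑T') = ⊥ := by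
      rw [hXT']
      exact (indep_iff W J).mp hJindep
    have hT'sub : ↑T' ⊆ X \ I := by
      intro x hx
      exact hT₁sub (Finset.mem_coe.mpr (Finset.mem_of_mem_filter _ (Finset.mem_coe.mp hx)))
    have hcard : T'.card < T₁.card := by
      refine Finset.card_lt_card ?_
      rw [Finset.ssubset_iff_of_subset (Finset.filter_subset _ _)]
      exact ⟨e, heT₁, by simp [heJ]⟩
    have hmin := Nat.find_min' hP2 ⟨T', hT'sub, hT'bot, rfl⟩
    omega
end

section
/- The matroid M(W) = (E, C(W)) induced by a nonzero finite-dimensional subspace W ⊆ K^E of dimension s is cofinitary: every circuit of the dual matroid M(W)* has at most s+1 elements. In particular M(W) is tame. -/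
/-- `IsDualBasis u B` : B = {j_1,…,j_s} ⊆ E is an s-element set with
Span{u^{(j_1)},…,u^{(j_s)}} = K^s; these are the bases of the dual matroid
M(W)*. -/
def IsDualBasis {K E : Type*} [Field K] {s : ℕ} (u : E → (Fin s → K)) (B : Set E) : Prop :=
  ∃ j : Fin s → E, Function.Injective j ∧ Set.range j = B ∧
    Submodule.span K (Set.range (u ∘ j)) = ⊤

/-! The sets `D` with `D.Nonempty ∧ ∀ B, IsDualBasis u B → ¬ D ⊆ B` are the dependent sets of the
dual matroid `M(W)*`, whose bases all have exactly `s` elements. A cocircuit `C*` of `M(W)` is a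
minimal such set, so removing any point `x` of it leaves an independent set of `M(W)*`, of size at
most `s`; hence `C*` has at most `s + 1` elements. -/

theorem IsDualBasis.finite {K E : Type*} [Field K] {s : ℕ} {u : E → (Fin s → K)} {B : Set E}
    (hB : IsDualBasis u B) : B.Finite := by
  obtain ⟨j, -, rfl, -⟩ := hB
  exact Set.finite_range j

theorem IsDualBasis.ncard_eq {K E : Type*} [Field K] {s : ℕ} {u : E → (Fin s → K)} {B : Set E}
    (hB : IsDualBasis u B) : B.ncard = s := by
  obtain ⟨j, hj, rfl, -⟩ := hB
  rw [Set.ncard_range_of_injective hj, Nat.card_eq_fintype_card, Fintype.card_fin]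

theorem Set.finite_and_ncard_le_succ_of_minimal_not_subset {E : Type*} {P : Set E → Prop}
    {s : ℕ} (hP : ∀ B, P B → B.Finite ∧ B.ncard ≤ s) {C : Set E}
    (hC : Minimal (fun D : Set E => D.Nonempty ∧ ∀ B, P B → ¬ D ⊆ B) C) :
    C.Finite ∧ C.ncard ≤ s + 1 := by
  obtain ⟨x, hx⟩ := hC.prop.1
  have hdiff : (C \ {x}).Finite ∧ (C \ {x}).ncard ≤ s := by
    rcases (C \ {x}).eq_empty_or_nonempty with hempty | hne
    · simp [hempty]
    · have hnot := hC.not_prop_of_ssubset (Set.sdiff_singleton_ssubset.2 hx)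
      push Not at hnot
      obtain ⟨B, hB, hsub⟩ := hnot hne
      obtain ⟨hBfin, hBcard⟩ := hP B hB
      exact ⟨hBfin.subset hsub, (Set.ncard_le_ncard hsub hBfin).trans hBcard⟩
  have hCfin : C.Finite := hdiff.1.of_sdiff (Set.finite_singleton x)
  refine ⟨hCfin, ?_⟩
  rw [← Set.ncard_sdiff_singleton_add_one hx hCfin]
  exact Nat.add_le_add_right hdiff.2 1

theorem stmt9_general {K E : Type*} [Field K] {s : ℕ}
    (φ : Fin s → (E → K))
    (u : E → (Fin s → K))
    (Cstar : Set E)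
    (hCstar : Minimal (fun D : Set E =>
      D.Nonempty ∧ ∀ B : Set E, IsDualBasis u B → ¬ D ⊆ B) Cstar) :
    Cstar.Finite ∧ Nat.card Cstar ≤ s + 1 ∧
      ∀ C : Set E, IsCircuit (Submodule.span K (Set.range φ)) C →
        (C ∩ Cstar).Finite := by
  obtain ⟨hfin, hcard⟩ := Set.finite_and_ncard_le_succ_of_minimal_not_subset
    (fun B hB => ⟨IsDualBasis.finite hB, (IsDualBasis.ncard_eq hB).le⟩) hCstar
  exact ⟨hfin, hcard, fun C _ => hfin.inter_of_right C⟩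

/-- the matroid M(W) of minimal supports of an s-dimensional
subspace W = span{φ_1,…,φ_s} ⊆ K^E is cofinitary: every cocircuit (a minimal
nonempty set contained in no basis of the dual matroid) has at most s+1
elements; in particular M(W) is tame: every intersection of a circuit and a
cocircuit is finite. -/
theorem stmt9 {K E : Type*} [Field K] {s : ℕ} (hs : 0 < s)
    (φ : Fin s → (E → K)) (hφ : LinearIndependent K φ)
    (u : E → (Fin s → K)) (hu : ∀ j i, u j i = φ i j)
    (Cstar : Set E)
    (hCstar : Minimal (fun D : Set E =>
      D.Nonempty ∧ ∀ B : Set E, IsDualBasis u B → ¬ D ⊆ B) Cstar) :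
    Cstar.Finite ∧ Nat.card Cstar ≤ s + 1 ∧
      ∀ C : Set E, IsCircuit (Submodule.span K (Set.range φ)) C →
        (C ∩ Cstar).Finite :=
  stmt9_general φ u Cstar hCstar
end

section
/- A subset X ⊆ E is independent in the matroid M(W) (i.e. contains no minimal support of W) if and only if there exist j_1,…,j_s ∈ E \ X such that u^{(j_1)},…,u^{(j_s)} are linearly independent in K^s. -/
/-!
The map `c ↦ ∑ cᵢ φᵢ` is an isomorphism `K^s ≃ W` whose value at `j ∈ E` is `c ⬝ᵥ u^{(j)}`.
Hence a nonzero element of `W` vanishing off `X` is a nonzero `c` orthogonal to every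
`u^{(j)}`, `j ∉ X`; such a `c` exists iff these vectors do not span `K^s`, i.e. iff no `s` of
them are linearly independent. Finally `X` contains a circuit iff it contains the support of a
nonzero `w ∈ W`: among the nonzero elements of `W` supported in `support w`, one minimising the
dimension of the subspace of `W` supported in its own support has minimal support.
-/

open Function Submodule

section Circuits

variable {K E : Type*} [Field K]

theorem mem_pi_compl_bot_iff_support_subset {A : Set E} {v : E → K} :
    v ∈ pi Aᶜ (fun _ => (⊥ : Submodule K K)) ↔ support v ⊆ A := by
  simp only [mem_pi, Set.mem_compl_iff, mem_bot, support_subset_iff']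

theorem exists_isCircuit_subset_support {W : Submodule K (E → K)} [FiniteDimensional K W]
    {w : E → K} (hw : w ∈ W) (hw0 : w ≠ 0) :
    ∃ C, IsCircuit W C ∧ C ⊆ support w := by
  let V (v : E → K) : Submodule K (E → K) := W ⊓ pi (support v)ᶜ (fun _ => ⊥)
  let S : Set (E → K) := {v | v ∈ W ∧ v ≠ 0 ∧ support v ⊆ support w}
  set m := argminOn (fun v => Module.finrank K (V v)) S ⟨w, hw, hw0, subset_rfl⟩
  obtain ⟨hmW, hm0, hmw⟩ : m ∈ S := argminOn_mem _ _ _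
  refine ⟨support m, ⟨m, hmW, hm0, rfl, fun v hvW hv0 hvm => ?_⟩, hmw⟩
  by_contra hne
  -- `m ∉ V v`, as otherwise `support m ⊆ support v`.
  have hlt : V v < V m := by
    refine lt_of_le_of_ne (inf_le_inf_left _ fun x hx => ?_) fun heq => hne ?_
    · exact mem_pi_compl_bot_iff_support_subset.2
        ((mem_pi_compl_bot_iff_support_subset.1 hx).trans hvm)
    · have hm : m ∈ V v := by
        rw [heq]; exact mem_inf.2 ⟨hmW, mem_pi_compl_bot_iff_support_subset.2 subset_rfl⟩
      exact hvm.antisymm (mem_pi_compl_bot_iff_support_subset.1 (mem_inf.1 hm).2)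
  exact not_lt_argminOn (fun v => Module.finrank K (V v)) S ⟨hvW, hv0, hvm.trans hmw⟩
    (finrank_lt_finrank_of_lt hlt)

theorem forall_isCircuit_not_subset_iff {W : Submodule K (E → K)} [FiniteDimensional K W]
    (X : Set E) :
    (∀ C, IsCircuit W C → ¬ C ⊆ X) ↔ ∀ w ∈ W, w ≠ 0 → ¬ support w ⊆ X := by
  constructor
  · intro h w hw hw0 hwX
    obtain ⟨C, hC, hCw⟩ := exists_isCircuit_subset_support hw hw0
    exact h C hC (hCw.trans hwX)
  · rintro h C ⟨w, hw, hw0, rfl, -⟩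
    exact h w hw hw0

end Circuits

section Coordinates

variable {K : Type*} [Field K]

theorem span_eq_top_iff_dotProduct {n : Type*} [Fintype n] [DecidableEq n] {S : Set (n → K)} :
    span K S = ⊤ ↔ ∀ c : n → K, (∀ v ∈ S, c ⬝ᵥ v = 0) → c = 0 := by
  rw [← dualAnnihilator_eq_bot_iff, eq_bot_iff, ← SetLike.coe_subset_coe,
    coe_dualAnnihilator_span]
  simp only [Set.subset_def, Set.mem_ofPred_eq, SetLike.mem_coe, mem_bot, LinearMap.mem_ker]
  rw [(dotProductEquiv K n).symm.toEquiv.forall_congr_left]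
  simp

theorem forall_mem_span_not_support_subset_iff {E ι : Type*} [Fintype ι] [DecidableEq ι]
    {φ : ι → E → K} (hφ : LinearIndependent K φ) (X : Set E) :
    (∀ w ∈ span K (Set.range φ), w ≠ 0 → ¬ support w ⊆ X) ↔
      span K (swap φ '' Xᶜ) = ⊤ := by
  have hΦ (c : ι → K) (j : E) : Fintype.linearCombination K φ c j = c ⬝ᵥ swap φ j := by
    simp [Fintype.linearCombination_apply, Finset.sum_apply, dotProduct]
  rw [span_eq_top_iff_dotProduct, ← Fintype.range_linearCombination]
  simp only [LinearMap.mem_range, forall_exists_index, forall_apply_eq_imp_iff,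
    Set.forall_mem_image, support_subset_iff', hΦ, Set.mem_compl_iff]
  refine forall_congr' fun c => ?_
  rw [ne_eq, ← map_zero (Fintype.linearCombination K φ),
    hφ.fintypeLinearCombination_injective.eq_iff]
  tauto

theorem span_image_eq_top_iff_exists_linearIndependent {V ι : Type*} [AddCommGroup V]
    [Module K V] [FiniteDimensional K V] {n : ℕ} (hn : Module.finrank K V = n) (v : ι → V)
    (T : Set ι) :
    span K (v '' T) = ⊤ ↔ ∃ j : Fin n → ι, (∀ i, j i ∈ T) ∧ LinearIndependent K (v ∘ j) := by
  constructor
  · intro hT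
    obtain ⟨κ, a, -, hspan, hli⟩ :=
      exists_linearIndependent' K (v ∘ (Subtype.val : T → ι))
    rw [Set.range_comp v, Subtype.range_coe, hT] at hspan
    let e := (Module.Basis.mk hli hspan.ge).indexEquiv (Module.finBasisOfFinrankEq K V hn)
    exact ⟨Subtype.val ∘ a ∘ e.symm, fun i => (a (e.symm i)).2,
      hli.comp e.symm e.symm.injective⟩
  · rintro ⟨j, hjT, hli⟩
    refine eq_top_iff.2 ((hli.span_eq_top_of_card_eq_finrank' (by simp [hn])).ge.trans
      (span_mono ?_))
    rintro _ ⟨i, rfl⟩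
    exact ⟨j i, hjT i, rfl⟩

end Coordinates

theorem stmt10_general {K E : Type*} [Field K] {s : ℕ}
    (φ : Fin s → (E → K)) (hφ : LinearIndependent K φ)
    (u : E → (Fin s → K)) (hu : ∀ j i, u j i = φ i j)
    (X : Set E) :
    (∀ C, IsCircuit (Submodule.span K (Set.range φ)) C → ¬ C ⊆ X) ↔
      ∃ j : Fin s → E, (∀ i, j i ∉ X) ∧ LinearIndependent K (u ∘ j) := by
  obtain rfl : u = swap φ := funext fun j => funext (hu j)
  have := FiniteDimensional.span_of_finite K (Set.finite_range φ)
  rw [forall_isCircuit_not_subset_iff, forall_mem_span_not_support_subset_iff hφ]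
  exact span_image_eq_top_iff_exists_linearIndependent (Module.finrank_fin_fun K) _ _

/-- X ⊆ E is independent in M(W) (contains no minimal support
of W = span{φ_1,…,φ_s}) iff there exist j_1,…,j_s ∈ E \ X such that
u^{(j_1)},…,u^{(j_s)} are linearly independent in K^s. -/
theorem stmt10 {K E : Type*} [Field K] {s : ℕ} (hs : 0 < s)
    (φ : Fin s → (E → K)) (hφ : LinearIndependent K φ)
    (u : E → (Fin s → K)) (hu : ∀ j i, u j i = φ i j)
    (X : Set E) :
    (∀ C, IsCircuit (Submodule.span K (Set.range φ)) C → ¬ C ⊆ X) ↔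
      ∃ j : Fin s → E, (∀ i, j i ∉ X) ∧ LinearIndependent K (u ∘ j) :=
  stmt10_general φ hφ u hu X
end

section
/- Let W ⊆ K^E be a finite-dimensional subspace with #E < #S(K) (where S(K) = K ∪ {K}). Then the map Ψ_W sending a proper subspace L ⊆ K^s generated by a subfamily of {u^{(j)}}_{j∈E} to {i ∈ E : u^{(i)} ∉ L} is a bijection between such subspaces Lin(W) and the set T(W) of supports of elements of W. -/
/-!
Every element of `W` is `f ∘ u` for a linear form `f` on `K^s`, with support
`{j | u j ∉ ker f}`. So the support of a nonzero `f ∘ u` is `Ψ` of the span of the `u j`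
lying in `ker f`, and a subspace `L` spanned by some `u j` is recovered from `Ψ L` as the span of
the `u j` it contains. Conversely, for a proper such `L` we need a form vanishing on `L` but on
no `u j ∉ L`: in coordinates on `(K^s ⧸ L)^*` this asks for a point off fewer than `#K + 1`
hyperplanes, which exists by induction on the dimension. Finally `f ∘ u ≠ 0` because the
`u j` span `K^s`, the `φ i` being linearly independent.
-/

open Cardinal Module Submodule Matrix

theorem Cardinal.mk_subtype_lt_of_lt_add_one {α β : Type u} {p : α → Prop} (h : ∃ a, ¬ p a)
    (hα : #α < #β + 1) : #{a // p a} < #β := by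
  have hcompl : 1 ≤ #({a | p a}ᶜ : Set α) :=
    Cardinal.one_le_iff_ne_zero.2 <| mk_ne_zero_iff.2 <| h.elim fun a ha => ⟨⟨a, ha⟩⟩
  by_contra! hle
  exact hα.not_ge <| (add_le_add hle hcompl).trans (mk_sum_compl _).le

theorem exists_forall_dotProduct_ne_zero {K ι : Type u} [Field K] {n : ℕ} (a : ι → Fin n → K)
    (ha : ∀ i, a i ≠ 0) (hι : #ι < #K + 1) : ∃ x : Fin n → K, ∀ i, x ⬝ᵥ a i ≠ 0 := by
  induction n generalizing ι with
  | zero => exact ⟨0, fun i => (ha i (Subsingleton.elim _ _)).elim⟩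
  | succ n ih =>
    obtain ⟨y, hy⟩ := ih (fun i : {i // vecTail (a i) ≠ 0} => vecTail (a i.1)) (fun i => i.2)
      ((mk_subtype_le _).trans_lt hι)
    by_cases htail : ∀ i, vecTail (a i) ≠ 0
    · refine ⟨vecCons 0 y, fun i => ?_⟩
      simpa using hy ⟨i, htail i⟩
    push Not at htail
    -- Some `a i` is supported on the first coordinate alone, so fewer than `#K` values of `t`
    -- have to be avoided in `x = (1, t • y)`.
    have hsmall := mk_subtype_lt_of_lt_add_one (htail.imp fun _ h => not_not.2 h) hι
    obtain ⟨t, ht⟩ : ∃ t : K, ∀ i : {i // vecTail (a i) ≠ 0},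
        t ≠ -vecHead (a i.1) / (y ⬝ᵥ vecTail (a i.1)) := by
      by_contra! h
      exact (mk_le_of_surjective fun t => (h t).imp fun i hi => hi.symm).not_gt hsmall
    refine ⟨vecCons 1 (t • y), fun i => ?_⟩
    rw [cons_dotProduct, smul_dotProduct, smul_eq_mul, one_mul]
    by_cases hi : vecTail (a i) = 0
    · have : vecHead (a i) ≠ 0 := fun h0 => ha i <| by
        rw [← cons_head_tail (a i), h0, hi]; exact cons_zero_zero
      simpa [hi] using this
    · intro h
      apply ht ⟨i, hi⟩
      rw [eq_div_iff (hy ⟨i, hi⟩)]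
      linear_combination h

section Dual

variable {K ι : Type u} {V : Type*} [Field K] [AddCommGroup V] [Module K V]

theorem Module.exists_dual_forall_apply_ne_zero_of_mk_lt [FiniteDimensional K V] (v : ι → V)
    (hv : ∀ i, v i ≠ 0) (hι : #ι < #K + 1) : ∃ f : Dual K V, ∀ i, f (v i) ≠ 0 := by
  let b := finBasis K V
  obtain ⟨x, hx⟩ := exists_forall_dotProduct_ne_zero (fun i => b.equivFun (v i))
    (fun i => b.equivFun.map_ne_zero_iff.2 (hv i)) hι
  exact ⟨(dotProductBilin K K x).comp b.equivFun.toLinearMap, by simpa using hx⟩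

theorem Submodule.exists_dual_le_ker_forall_apply_ne_zero [FiniteDimensional K V]
    (L : Submodule K V) (v : ι → V) (hv : ∀ i, v i ∉ L) (hι : #ι < #K + 1) :
    ∃ f : Dual K V, L ≤ LinearMap.ker f ∧ ∀ i, f (v i) ≠ 0 := by
  obtain ⟨f, hf⟩ := exists_dual_forall_apply_ne_zero_of_mk_lt (fun i => L.mkQ (v i))
    (fun i => by simpa using hv i) hι
  exact ⟨f.comp L.mkQ, fun x hx => by simp [(Quotient.mk_eq_zero L).2 hx], hf⟩

end Dual

section Span

variable {R M ι : Type*} [Semiring R] [AddCommMonoid M] [Module R M] (v : ι → M)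

theorem Submodule.apply_mem_span_image_preimage_iff {N : Submodule R M} {j : ι} :
    v j ∈ span R (v '' (v ⁻¹' N)) ↔ v j ∈ N :=
  ⟨fun h => span_le.2 (Set.image_preimage_subset v N) h, fun h => subset_span ⟨j, h, rfl⟩⟩

theorem Submodule.span_image_preimage_span_image (X : Set ι) :
    span R (v '' (v ⁻¹' span R (v '' X))) = span R (v '' X) :=
  le_antisymm (span_le.2 (Set.image_preimage_subset _ _))
    (span_mono (Set.image_mono fun _ hj => subset_span ⟨_, hj, rfl⟩))

end Span

section Transpose

variable {K E : Type*} [Field K] {s : ℕ} {φ : Fin s → E → K} {u : E → Fin s → K}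

theorem dual_comp_eq_sum_smul (hu : ∀ j i, u j i = φ i j) (f : Dual K (Fin s → K)) :
    f ∘ u = ∑ k, f (Pi.single k 1) • φ k := by
  ext j
  conv_lhs => rw [Function.comp_apply, ← Finset.univ_sum_single (u j)]
  simp only [map_sum, Finset.sum_apply, Pi.smul_apply, hu]
  refine Finset.sum_congr rfl fun k _ => ?_
  rw [smul_eq_mul, mul_comm, ← smul_eq_mul, ← map_smul, ← Pi.single_smul', smul_eq_mul, mul_one]

theorem mem_span_range_iff_exists_dual_comp (hu : ∀ j i, u j i = φ i j) {w : E → K} :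
    w ∈ span K (Set.range φ) ↔ ∃ f : Dual K (Fin s → K), f ∘ u = w := by
  constructor
  · intro hw
    obtain ⟨c, rfl⟩ := (mem_span_range_iff_exists_fun K).1 hw
    refine ⟨dotProductBilin K K c, funext fun j => ?_⟩
    simp [dotProduct, hu, mul_comm]
  · rintro ⟨f, rfl⟩
    rw [dual_comp_eq_sum_smul hu]
    exact sum_mem fun k _ => smul_mem _ _ (subset_span ⟨k, rfl⟩)

theorem span_range_eq_top_of_linearIndependent (hφ : LinearIndependent K φ)
    (hu : ∀ j i, u j i = φ i j) : span K (Set.range u) = ⊤ := by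
  by_contra h
  obtain ⟨f, hf0, hf⟩ := exists_dual_map_eq_bot_of_lt_top (lt_top_iff_ne_top.2 h) inferInstance
  have hfu : ∑ k, f (Pi.single k 1) • φ k = 0 := by
    rw [← dual_comp_eq_sum_smul hu]
    funext j
    exact LinearMap.le_ker_iff_map.2 hf (subset_span ⟨j, rfl⟩)
  exact hf0 <| (Pi.basisFun K (Fin s)).ext fun k => by
    simpa using Fintype.linearIndependent_iff.1 hφ _ hfu k

end Transpose

theorem stmt12_general {K E : Type u} [Field K] {s : ℕ}
    (φ : Fin s → (E → K)) (hφ : LinearIndependent K φ)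
    (u : E → (Fin s → K)) (hu : ∀ j i, u j i = φ i j)
    (hcard : Cardinal.mk E < Cardinal.mk K + 1) :
    Set.BijOn (fun L : Submodule K (Fin s → K) => {i : E | u i ∉ L})
      {L | L ≠ ⊤ ∧ ∃ X : Set E, L = Submodule.span K (u '' X)}
      {S | ∃ w ∈ Submodule.span K (Set.range φ), w ≠ 0 ∧ Function.support w = S} := by
  refine ⟨?mapsTo, ?injOn, ?surjOn⟩
  case mapsTo =>
    rintro L ⟨hL, -⟩
    obtain ⟨f, hLf, hf⟩ := L.exists_dual_le_ker_forall_apply_ne_zero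
      (fun j : {j // u j ∉ L} => u j) (fun j => j.2) ((mk_subtype_le _).trans_lt hcard)
    obtain ⟨j, hj⟩ : ∃ j, u j ∉ L := by
      by_contra! h
      exact hL (eq_top_iff.2 <| span_range_eq_top_of_linearIndependent hφ hu ▸
        span_le.2 (Set.range_subset_iff.2 h))
    refine ⟨f ∘ u, (mem_span_range_iff_exists_dual_comp hu).2 ⟨f, rfl⟩,
      fun h => hf ⟨j, hj⟩ (congrFun h j),
      Set.ext fun j => ⟨fun hj hjL => hj (hLf hjL), fun hj => hf ⟨j, hj⟩⟩⟩
  case injOn =>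
    rintro _ ⟨-, X₁, rfl⟩ _ ⟨-, X₂, rfl⟩ h
    have hpre : u ⁻¹' span K (u '' X₁) = u ⁻¹' span K (u '' X₂) :=
      compl_injective h
    rw [← span_image_preimage_span_image, hpre, span_image_preimage_span_image]
  case surjOn =>
    rintro _ ⟨w, hw, hw0, rfl⟩
    obtain ⟨f, rfl⟩ := (mem_span_range_iff_exists_dual_comp hu).1 hw
    have hle : span K (u '' (u ⁻¹' LinearMap.ker f)) ≤ LinearMap.ker f :=
      span_le.2 (Set.image_preimage_subset _ _)
    refine ⟨span K (u '' (u ⁻¹' LinearMap.ker f)), ⟨fun htop => hw0 ?_, _, rfl⟩, ?_⟩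
    · rw [htop, top_le_iff, LinearMap.ker_eq_top] at hle
      rw [hle]; rfl
    · ext j
      simp [apply_mem_span_image_preimage_iff]

/-- if #E < #S(K) = #K + 1, the map Ψ_W : L ↦ {i ∈ E : u^{(i)} ∉ L}
is a bijection between Lin(W) (the proper subspaces of K^s generated by
subfamilies of {u^{(j)}}_{j∈E}) and the set T(W) of (nonempty) supports of
nonzero elements of W = span{φ_1,…,φ_s}. -/
theorem stmt12 {K E : Type u} [Field K] {s : ℕ} (hs : 0 < s)
    (φ : Fin s → (E → K)) (hφ : LinearIndependent K φ)
    (u : E → (Fin s → K)) (hu : ∀ j i, u j i = φ i j)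
    (hcard : Cardinal.mk E < Cardinal.mk K + 1) :
    Set.BijOn (fun L : Submodule K (Fin s → K) => {i : E | u i ∉ L})
      {L | L ≠ ⊤ ∧ ∃ X : Set E, L = Submodule.span K (u '' X)}
      {S | ∃ w ∈ Submodule.span K (Set.range φ), w ≠ 0 ∧ Function.support w = S} :=
  stmt12_general φ hφ u hu hcard
end

section
/- If W ⊆ K^E is a finite-dimensional subspace and #E < #S(K), then the set T(W) of supports of elements of W is closed under arbitrary unions: any union of supports of elements of W is again the support of some element of W. -/
/-!
Let `U` be the union of the supports. The elements of `W` vanishing off `U` form a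
finite-dimensional space `W'` on which every evaluation `w ↦ w x` with `x ∈ U` is a nonzero
linear form, and an element of `W'` has support `U` exactly when it avoids the kernels of all
these `#U < #S(K)` forms. A finite-dimensional space is never covered by that few hyperplanes:
over a field with `q` elements, `q` hyperplanes contain at most `q (q^(n-1) - 1)` nonzero vectors
out of `q^n - 1`; over an infinite field, a nonzero linear form vanishes at only finitely many
points of the moment curve `t ↦ ∑ tʲ bⱼ`, and fewer than `#K` finite sets cannot cover `K`.
-/

universe u

open Polynomial

section

variable {K V : Type*} [Field K] [AddCommGroup V] [Module K V]

theorem Module.Dual.card_ker_mul_card [Finite V] {φ : Module.Dual K V} (hφ : φ ≠ 0) :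
    Nat.card (LinearMap.ker φ) * Nat.card K = Nat.card V := by
  rw [(LinearMap.ker φ).card_eq_card_quotient_mul_card,
    Nat.card_congr (φ.quotKerEquivOfSurjective (LinearMap.surjective hφ)).toEquiv]

theorem Module.Dual.exists_forall_apply_ne_zero_of_finite [Finite K] [Finite V] {ι : Type*}
    [Finite ι] (φ : ι → Module.Dual K V) (hφ : ∀ i, φ i ≠ 0) (hι : Nat.card ι ≤ Nat.card K) :
    ∃ v, ∀ i, φ i v ≠ 0 := by
  classical
  have := Fintype.ofFinite ι
  have := Fintype.ofFinite V
  by_contra! hcover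
  let Z : ι → Finset V := fun i => {v | φ i v = 0}
  have hZ (i : ι) : (Z i).card * Nat.card K = Nat.card V := by
    rw [← (φ i).card_ker_mul_card (hφ i), Nat.card_eq_fintype_card (α := LinearMap.ker (φ i)),
      Fintype.card_subtype]
    rfl
  have hsub : Finset.univ.erase (0 : V) ⊆ Finset.univ.biUnion fun i => (Z i).erase 0 := by
    intro v hv
    obtain ⟨i, hi⟩ := hcover v
    simp only [Finset.mem_biUnion, Finset.mem_erase]
    exact ⟨i, Finset.mem_univ _, (Finset.mem_erase.mp hv).1, by simp [Z, hi]⟩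
  have hcount : (Nat.card V - 1) * Nat.card K ≤ (Nat.card V - Nat.card K) * Nat.card K := calc
    (Nat.card V - 1) * Nat.card K = (Finset.univ.erase (0 : V)).card * Nat.card K := by
      rw [Finset.card_erase_of_mem (Finset.mem_univ _), Finset.card_univ, Nat.card_eq_fintype_card]
    _ ≤ (∑ i, ((Z i).erase 0).card) * Nat.card K :=
      Nat.mul_le_mul_right _ ((Finset.card_le_card hsub).trans Finset.card_biUnion_le)
    _ = Nat.card ι * (Nat.card V - Nat.card K) := by
      rw [Finset.sum_mul, Finset.sum_congr rfl fun i _ => ?_, Finset.sum_const, Finset.card_univ,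
        smul_eq_mul, Nat.card_eq_fintype_card]
      rw [Finset.card_erase_of_mem (by simp [Z]), Nat.sub_mul, hZ i, one_mul]
    _ ≤ (Nat.card V - Nat.card K) * Nat.card K := by
      rw [mul_comm]
      exact Nat.mul_le_mul_left _ hι
  have hq : 1 < Nat.card K := Finite.one_lt_card
  obtain ⟨i₀, -⟩ := hcover 0
  have hqV : Nat.card K ≤ Nat.card V :=
    (Nat.le_mul_of_pos_left _ (Finset.card_pos.mpr ⟨0, by simp [Z]⟩)).trans (hZ i₀).le
  have := Nat.le_of_mul_le_mul_right hcount (by omega)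
  omega

theorem Module.Dual.exists_finite_setOf_apply_eq_zero [FiniteDimensional K V] :
    ∃ γ : K → V, ∀ φ : Module.Dual K V, φ ≠ 0 → {t | φ (γ t) = 0}.Finite := by
  let b := Module.finBasis K V
  refine ⟨fun t => ∑ j : Fin _, t ^ (j : ℕ) • b j, fun φ hφ => ?_⟩
  let P : K[X] := ∑ j : Fin _, monomial j (φ (b j))
  have hP : P ≠ 0 := by
    refine fun h => hφ (b.ext fun j => ?_)
    simpa [P, finsetSum_coeff, coeff_monomial, Fin.val_inj] using congr_arg (coeff · j) h
  refine (finite_setOfPred_isRoot hP).subset fun t ht => ?_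
  simpa [P, eval_finsetSum, mul_comm] using ht

end

open Cardinal

theorem Set.exists_notMem_iUnion_of_mk_lt {α ι : Type u} [Infinite α] (s : ι → Set α)
    (hs : ∀ i, (s i).Finite) (hι : #ι < #α) : ∃ a, a ∉ ⋃ i, s i := by
  rcases finite_or_infinite ι with _ | _
  · exact (Set.finite_iUnion hs).infinite_compl.nonempty
  · refine (Set.ne_univ_iff_exists_notMem _).mp fun h => ?_
    have hsup : ⨆ i, #(s i) ≤ ℵ₀ := ciSup_le' fun i => (hs i).countable.le_aleph0
    have : #α ≤ #ι := calc
      #α = #(⋃ i, s i) := by rw [h, mk_univ]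
      _ ≤ #ι * ⨆ i, #(s i) := mk_iUnion_le s
      _ ≤ #ι * ℵ₀ := by gcongr
      _ = #ι := mul_aleph0_eq (aleph0_le_mk ι)
    exact this.not_gt hι

theorem Module.Dual.exists_forall_apply_ne_zero {K ι : Type u} {V : Type*} [Field K]
    [AddCommGroup V] [Module K V] [FiniteDimensional K V] (φ : ι → Module.Dual K V)
    (hφ : ∀ i, φ i ≠ 0) (hι : #ι < #K + 1) : ∃ v, ∀ i, φ i v ≠ 0 := by
  rcases finite_or_infinite K with _ | _
  · have hle : #ι ≤ #K := le_of_not_gt fun h => (add_one_le_of_lt h).not_gt hι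
    have : Finite V := Module.finite_of_finite K
    have : Finite ι := lt_aleph0_iff_finite.mp (hle.trans_lt (lt_aleph0_of_finite K))
    exact exists_forall_apply_ne_zero_of_finite φ hφ
      (toNat_le_toNat hle (lt_aleph0_of_finite K))
  · rw [add_one_eq (aleph0_le_mk K)] at hι
    obtain ⟨γ, hγ⟩ := exists_finite_setOf_apply_eq_zero (K := K) (V := V)
    obtain ⟨t, ht⟩ := Set.exists_notMem_iUnion_of_mk_lt _ (fun i => hγ (φ i) (hφ i)) hι
    exact ⟨γ t, fun i hi => ht (Set.mem_iUnion.mpr ⟨i, hi⟩)⟩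

/-- if W ⊆ K^E is finite-dimensional and #E < #S(K) = #K + 1,
then the set of supports of elements of W is closed under arbitrary unions. -/
theorem stmt14 {K E : Type u} [Field K] (W : Submodule K (E → K))
    (hfin : FiniteDimensional K W)
    (hcard : Cardinal.mk E < Cardinal.mk K + 1)
    (A : Set (Set E)) (hA : ∀ S ∈ A, ∃ w ∈ W, Function.support w = S) :
    ∃ w ∈ W, Function.support w = ⋃₀ A := by
  let W' : Submodule K (E → K) := W ⊓ Submodule.pi (⋃₀ A)ᶜ fun _ => ⊥
  have : FiniteDimensional K W' := Submodule.finiteDimensional_of_le inf_le_left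
  let φ (x : ⋃₀ A) : Module.Dual K W' := LinearMap.proj (x : E) ∘ₗ W'.subtype
  have hφ (x : ⋃₀ A) : φ x ≠ 0 := by
    obtain ⟨S, hSA, hxS⟩ := x.2
    obtain ⟨w, hwW, rfl⟩ := hA S hSA
    have hw : w ∈ W' := ⟨hwW, fun y hy => (Submodule.mem_bot K).mpr <| by
      by_contra h; exact hy ⟨_, hSA, h⟩⟩
    exact fun h => hxS (LinearMap.congr_fun h ⟨w, hw⟩)
  obtain ⟨v, hv⟩ := Module.Dual.exists_forall_apply_ne_zero φ hφ
    ((mk_set_le _).trans_lt hcard)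
  refine ⟨v, v.2.1, Set.Subset.antisymm (fun x hx => ?_) fun x hx => hv ⟨x, hx⟩⟩
  by_contra hxA
  exact hx ((Submodule.mem_bot K).mp (v.2.2 x hxA))
end

section
/- Let K be a field and E a set with #S(K) ≤ #E. Then there exists a 2-dimensional subspace W ⊆ K^E such that the set of supports T(W) is not closed under union; explicitly, with φ_1 having coordinates b_{i_0}=0 and b_i=1 otherwise, and φ_2 = (a_i)_{i∈E} where a_{i_0}=1 and {a_i : i ≠ i_0} = K, the full set E is a union of two supports of elements of W but is not itself the support of any element of W = span{φ_1, φ_2}. -/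
open Classical in

/-- if #S(K) = #K + 1 ≤ #E, there is a 2-dimensional subspace
W = span{φ_1, φ_2} ⊆ K^E (φ_1 the indicator of E \ {i₀}, φ_2 = (a_i) with
a_{i₀} = 1 and {a_i : i ≠ i₀} = K) whose set of supports is not closed under
union: E is the union of the supports of φ_1 and φ_2 but is not the support
of any element of W. -/
theorem stmt15 {K E : Type u} [Field K]
    (hcard : Cardinal.mk K + 1 ≤ Cardinal.mk E) :
    ∃ (i₀ : E) (a : E → K), a i₀ = 1 ∧ (∀ c : K, ∃ i, i ≠ i₀ ∧ a i = c) ∧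
      Module.finrank K
        (Submodule.span K ({(fun i => if i = i₀ then (0 : K) else 1), a} : Set (E → K))) = 2 ∧
      Function.support (fun i => if i = i₀ then (0 : K) else 1) ∪ Function.support a
        = Set.univ ∧
      ∀ w ∈ Submodule.span K ({(fun i => if i = i₀ then (0 : K) else 1), a} : Set (E → K)),
        Function.support w ≠ Set.univ := by
  classical
  have h1 : Cardinal.mk (Option K) ≤ Cardinal.mk E := by simpa using hcard
  obtain ⟨f⟩ := h1
  set i₀ : E := f none with hi₀
  set a : E → K := fun i => if h : ∃ c : K, f (some c) = i then h.choose else 1 with ha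
  have ha_some : ∀ c : K, a (f (some c)) = c := by
    intro c
    have hex : ∃ c' : K, f (some c') = f (some c) := ⟨c, rfl⟩
    have := hex.choose_spec
    have hc : hex.choose = c := Option.some_injective _ (f.injective this)
    simp only [ha, dif_pos hex, hc]
  have hne : ∀ c : K, f (some c) ≠ i₀ := fun c h => by
    have := f.injective h; simp at this
  have ha0 : a i₀ = 1 := by
    have : ¬ ∃ c : K, f (some c) = i₀ := by
      rintro ⟨c, hc⟩; exact hne c hc
    simp only [ha, dif_neg this]
  have hsurj : ∀ c : K, ∃ i, i ≠ i₀ ∧ a i = c := fun c =>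
    ⟨f (some c), hne c, ha_some c⟩
  set φ : E → K := fun i => if i = i₀ then (0 : K) else 1 with hφ
  -- point where a vanishes, distinct from i₀
  obtain ⟨i₁, hi₁ne, hi₁⟩ := hsurj 0
  refine ⟨i₀, a, ha0, hsurj, ?_, ?_, ?_⟩
  · -- finrank = 2
    have hli : LinearIndependent K ![φ, a] := by
      rw [LinearIndependent.pair_iff]
      intro s t hst
      have h0 : s • φ i₀ + t • a i₀ = 0 := congrFun hst i₀
      have h1 : s • φ i₁ + t • a i₁ = 0 := congrFun hst i₁
      simp only [hφ, if_pos rfl, ha0, smul_eq_mul, mul_zero, mul_one, zero_add] at h0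
      simp only [hφ, if_neg hi₁ne, hi₁, smul_eq_mul, mul_one, mul_zero, add_zero] at h1
      exact ⟨h1, h0⟩
    have := finrank_span_eq_card hli
    rwa [Matrix.range_cons_cons_empty, Fintype.card_fin] at this
  · -- union of supports = univ
    ext i
    simp only [Set.mem_union, Function.mem_support, Set.mem_univ, iff_true]
    by_cases h : i = i₀
    · right; rw [h, ha0]; exact one_ne_zero
    · left; simp [h]
  · -- no element of the span has full support
    intro w hw hsupp
    rw [Submodule.mem_span_pair] at hw
    obtain ⟨s, t, hst⟩ := hw
    by_cases ht : t = 0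
    · have : w i₀ = 0 := by
        rw [← hst]; simp [ht, hφ]
      have : i₀ ∈ Function.support w := hsupp ▸ Set.mem_univ i₀
      exact this ‹w i₀ = 0›
    · obtain ⟨j, hjne, hj⟩ := hsurj (-s / t)
      have : w j = 0 := by
        rw [← hst]
        simp only [Pi.add_apply, Pi.smul_apply, smul_eq_mul, hφ, if_neg hjne, hj]
        field_simp
        ring
      have hm : j ∈ Function.support w := hsupp ▸ Set.mem_univ j
      exact hm this
end

section
/- Let K be a countable field K = {a_0, a_1, a_2, …} with a_0 = 0, a_1 = 1. Then there exist power series γ(t), β(t) ∈ K[[t]] such that the linear ODE y'' + γ(t)y' + β(t)y = 0 has solution space spanned by φ_1 = 1 + Σ_{i≥2} t^i and φ_2 = t + Σ_{i≥2} a_i t^i; moreover the union of supports supp(φ_1) ∪ supp(φ_2) = ℕ is not the support of any solution, since every nonzero solution has support ℕ \ {j} for some j ∈ ℕ. -/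
open PowerSeries

/-- Formal derivative of a univariate power series. -/
noncomputable def Dser {K : Type*} [Field K] (y : PowerSeries K) : PowerSeries K :=
  PowerSeries.mk fun i => ((i + 1 : ℕ) : K) * PowerSeries.coeff (R := K) (i + 1) y

/-- φ₁ = 1 + Σ_{i≥2} t^i. -/
noncomputable def phiOne (K : Type*) [Field K] : PowerSeries K :=
  PowerSeries.mk fun i => if i = 1 then 0 else 1

/-!
With `W = φ₁ φ₂' - φ₁' φ₂` the Wronskian, choose `γ = -W'/W` and `β = (φ₁' φ₂'' - φ₁'' φ₂')/W`:
then `W · (y'' + γ y' + β y)` is the Wronskian determinant of `y, φ₁, φ₂`, which vanishes for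
`y = φ₁, φ₂`. Here `W(0) = 1`, so `W` is invertible. The coefficient of `t^m` in the equation
determines `y_{m+2}` from lower coefficients, so every solution is `y₀ φ₁ + y₁ φ₂`. The combination
`c φ₁ + d φ₂` has coefficients `c` at `0`, `d` at `1` and `c + d a_i` at `i ≥ 2`; since `a`
enumerates `Kˣ` exactly once on `i ≥ 2`, exactly one of them vanishes when `(c, d) ≠ 0`.
-/

theorem Dser_eq_derivative {K : Type*} [Field K] : (Dser : K⟦X⟧ → K⟦X⟧) = d⁄dX K := by
  funext y
  ext n
  simp [Dser, coeff_derivative, mul_comm]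

section CommRing

variable {R : Type*} [CommRing R]

noncomputable def odeOp (γ β : R⟦X⟧) : R⟦X⟧ →ₗ[R] R⟦X⟧ where
  toFun y := d⁄dX R (d⁄dX R y) + γ * d⁄dX R y + β * y
  map_add' y z := by simp only [map_add]; ring
  map_smul' c y := by simp only [Derivation.map_smul, mul_smul_comm, smul_add, RingHom.id_apply]

theorem odeOp_apply (γ β y : R⟦X⟧) :
    odeOp γ β y = d⁄dX R (d⁄dX R y) + γ * d⁄dX R y + β * y :=
  rfl

theorem eq_zero_of_odeOp_eq_zero [IsDomain R] [CharZero R] {γ β z : R⟦X⟧}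
    (hz : odeOp γ β z = 0) (h0 : coeff 0 z = 0) (h1 : coeff 1 z = 0) : z = 0 := by
  suffices h : ∀ n, coeff n z = 0 from ext fun n => by rw [h, map_zero]
  intro n
  induction n using Nat.strong_induction_on with
  | _ n ih =>
  match n with
  | 0 => exact h0
  | 1 => exact h1
  | m + 2 =>
    have hlow : ∀ p : ℕ × ℕ, p.1 + p.2 = m →
        coeff p.1 γ * coeff p.2 (d⁄dX R z) + coeff p.1 β * coeff p.2 z = 0 := by
      intro p hp
      rw [coeff_derivative, ih (p.2 + 1) (by omega), ih p.2 (by omega)]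
      simp
    have hm := congrArg (coeff m) hz
    rw [odeOp_apply, map_add, map_add, coeff_mul, coeff_mul, add_assoc,
      ← Finset.sum_add_distrib,
      Finset.sum_eq_zero fun p hp => hlow p (Finset.HasAntidiagonal.mem_antidiagonal.mp hp),
      add_zero, coeff_derivative, coeff_derivative, map_zero] at hm
    have hm2 : (m : R) + 1 + 1 ≠ 0 := by exact_mod_cast Nat.succ_ne_zero (m + 1)
    have hm1 : (m : R) + 1 ≠ 0 := Nat.cast_add_one_ne_zero m
    simpa [hm1, hm2] using hm

noncomputable def wronskian (f g : R⟦X⟧) : R⟦X⟧ :=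
  f * d⁄dX R g - d⁄dX R f * g

theorem derivative_wronskian (f g : R⟦X⟧) :
    d⁄dX R (wronskian f g) = f * d⁄dX R (d⁄dX R g) - d⁄dX R (d⁄dX R f) * g := by
  simp only [wronskian, map_sub, Derivation.leibniz, smul_eq_mul]
  ring

end CommRing

section Field

variable {K : Type*} [Field K]

-- `γ = -W'/W` is forced by Abel's identity `W' = -γ W`.
noncomputable def odeGamma (φ₁ φ₂ : K⟦X⟧) : K⟦X⟧ :=
  -d⁄dX K (wronskian φ₁ φ₂) * (wronskian φ₁ φ₂)⁻¹

noncomputable def odeBeta (φ₁ φ₂ : K⟦X⟧) : K⟦X⟧ :=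
  wronskian (d⁄dX K φ₁) (d⁄dX K φ₂) * (wronskian φ₁ φ₂)⁻¹

variable {φ₁ φ₂ : K⟦X⟧}

theorem wronskian_mul_odeOp (hW : constantCoeff (wronskian φ₁ φ₂) ≠ 0) (y : K⟦X⟧) :
    wronskian φ₁ φ₂ * odeOp (odeGamma φ₁ φ₂) (odeBeta φ₁ φ₂) y =
      wronskian φ₁ φ₂ * d⁄dX K (d⁄dX K y) - d⁄dX K (wronskian φ₁ φ₂) * d⁄dX K y +
        wronskian (d⁄dX K φ₁) (d⁄dX K φ₂) * y := by
  have hinv := PowerSeries.mul_inv_cancel _ hW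
  simp only [odeOp_apply, odeGamma, odeBeta]
  linear_combination (-d⁄dX K (wronskian φ₁ φ₂) * d⁄dX K y +
    wronskian (d⁄dX K φ₁) (d⁄dX K φ₂) * y) * hinv

theorem odeOp_eq_zero_of_mem_pair (hW : constantCoeff (wronskian φ₁ φ₂) ≠ 0) {y : K⟦X⟧}
    (hy : y ∈ ({φ₁, φ₂} : Set K⟦X⟧)) : odeOp (odeGamma φ₁ φ₂) (odeBeta φ₁ φ₂) y = 0 := by
  have hW' : wronskian φ₁ φ₂ ≠ 0 := fun h => hW (by rw [h, map_zero])
  refine (mul_eq_zero.mp ?_).resolve_left hW'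
  rw [wronskian_mul_odeOp hW, derivative_wronskian]
  rcases hy with rfl | rfl <;> simp only [wronskian] <;> ring

variable [CharZero K]

theorem odeOp_eq_zero_iff_mem_span (h₁₀ : coeff 0 φ₁ = 1) (h₁₁ : coeff 1 φ₁ = 0)
    (h₂₀ : coeff 0 φ₂ = 0) (h₂₁ : coeff 1 φ₂ = 1) (y : K⟦X⟧) :
    odeOp (odeGamma φ₁ φ₂) (odeBeta φ₁ φ₂) y = 0 ↔ y ∈ Submodule.span K {φ₁, φ₂} := by
  have hW : constantCoeff (wronskian φ₁ φ₂) ≠ 0 := by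
    simp only [wronskian, map_sub, map_mul, ← coeff_zero_eq_constantCoeff_apply,
      coeff_derivative, h₁₀, h₁₁, h₂₀, h₂₁]
    norm_num
  have hspan : Submodule.span K {φ₁, φ₂} ≤ LinearMap.ker (odeOp (odeGamma φ₁ φ₂) (odeBeta φ₁ φ₂)) :=
    Submodule.span_le.mpr fun y hy => odeOp_eq_zero_of_mem_pair hW hy
  refine ⟨fun hy => ?_, fun hy => hspan hy⟩
  set w := coeff 0 y • φ₁ + coeff 1 y • φ₂
  have hw : w ∈ Submodule.span K {φ₁, φ₂} := Submodule.mem_span_pair.mpr ⟨_, _, rfl⟩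
  have hyw : y - w = 0 := by
    refine eq_zero_of_odeOp_eq_zero (γ := odeGamma φ₁ φ₂) (β := odeBeta φ₁ φ₂) ?_ ?_ ?_
    · rw [map_sub, hy, LinearMap.mem_ker.mp (hspan hw), sub_zero]
    · simp only [w, map_sub, map_add, map_smul, smul_eq_mul, h₁₀, h₂₀]
      ring
    · simp only [w, map_sub, map_add, map_smul, smul_eq_mul, h₁₁, h₂₁]
      ring
  rwa [sub_eq_zero.mp hyw]

end Field

theorem setOf_ne_zero_eq_compl_singleton_iff {α M : Type*} [Zero M] {f : α → M} {j : α} :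
    {i | f i ≠ 0} = {j}ᶜ ↔ ∀ i, f i = 0 ↔ i = j := by
  simp only [Set.ext_iff, Set.mem_ofPred_eq, Set.mem_compl_iff, Set.mem_singleton_iff, not_iff_not]

section Support

variable {K : Type*} [Field K]

theorem coeff_phiOne (i : ℕ) : coeff i (phiOne K) = if i = 1 then 0 else 1 :=
  coeff_mk _ _

theorem exists_setOf_coeff_ne_zero_eq_compl_singleton (a : ℕ → K) (h0 : a 0 = 0) (h1 : a 1 = 1)
    (hne : ∀ i, 2 ≤ i → a i ≠ 0) (hex : ∀ c : K, c ≠ 0 → ∃! i, 2 ≤ i ∧ a i = c) {c d : K}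
    (hcd : c ≠ 0 ∨ d ≠ 0) :
    ∃ j, {i | coeff i (c • phiOne K + d • mk a) ≠ 0} = {j}ᶜ := by
  have hcoeff : ∀ i, coeff i (c • phiOne K + d • mk a) = if i = 1 then d else c + d * a i := by
    intro i
    split_ifs with hi <;> simp [coeff_phiOne, hi, h1]
  simp_rw [hcoeff, setOf_ne_zero_eq_compl_singleton_iff]
  by_cases hd : d = 0
  · refine ⟨1, fun i => ?_⟩
    have hc : c ≠ 0 := hcd.resolve_right (not_not.mpr hd)
    split_ifs with hi <;> simp [hi, hd, hc]
  by_cases hc : c = 0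
  · refine ⟨0, fun i => ?_⟩
    match i with
    | 0 => simp [h0, hc]
    | 1 => simp [hd]
    | i + 2 => simp [hc, hd, hne (i + 2) (by omega)]
  obtain ⟨j, ⟨hj2, hja⟩, hj⟩ := hex (-c / d) (div_ne_zero (neg_ne_zero.mpr hc) hd)
  refine ⟨j, fun i => ?_⟩
  match i with
  | 0 => simpa [h0, hc] using (by omega : 0 ≠ j)
  | 1 => simpa [hd] using (by omega : 1 ≠ j)
  | i + 2 =>
    have hroot : c + d * a (i + 2) = 0 ↔ a (i + 2) = -c / d := by
      rw [eq_div_iff hd]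
      constructor <;> intro h <;> linear_combination h
    simp only [show i + 2 ≠ 1 by omega, if_false, hroot]
    exact ⟨fun h => hj (i + 2) ⟨by omega, h⟩, fun h => h ▸ hja⟩

end Support

/-- for a countable field K of characteristic zero enumerated as
K = {a_0 = 0, a_1 = 1, a_2, …} (each nonzero value appearing exactly once among
the indices ≥ 2), there are γ, β ∈ K[[t]] such that the solutions of
y'' + γ y' + β y = 0 are exactly span{φ₁, φ₂} with φ₁ = 1 + Σ_{i≥2} t^i and
φ₂ = Σ_i a_i t^i = t + Σ_{i≥2} a_i t^i; moreover supp φ₁ ∪ supp φ₂ = ℕ,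
every nonzero solution has support ℕ \ {j} for some j, and ℕ is not the
support of any solution. -/
theorem stmt17 {K : Type*} [Field K] [CharZero K] (a : ℕ → K)
    (h0 : a 0 = 0) (h1 : a 1 = 1)
    (hne : ∀ i, 2 ≤ i → a i ≠ 0)
    (hex : ∀ c : K, c ≠ 0 → ∃! i, 2 ≤ i ∧ a i = c) :
    ∃ γ β : PowerSeries K,
      (∀ y : PowerSeries K,
        Dser (Dser y) + γ * Dser y + β * y = 0 ↔
          y ∈ Submodule.span K ({phiOne K, PowerSeries.mk a} : Set (PowerSeries K))) ∧
      ({i | PowerSeries.coeff (R := K) i (phiOne K) ≠ 0} ∪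
        {i | PowerSeries.coeff (R := K) i (PowerSeries.mk a) ≠ 0} = Set.univ) ∧
      (∀ y : PowerSeries K, Dser (Dser y) + γ * Dser y + β * y = 0 → y ≠ 0 →
        ∃ j : ℕ, {i | PowerSeries.coeff (R := K) i y ≠ 0} = {j}ᶜ) ∧
      (∀ y : PowerSeries K, Dser (Dser y) + γ * Dser y + β * y = 0 →
        {i | PowerSeries.coeff (R := K) i y ≠ 0} ≠ Set.univ) := by
  have hsol := odeOp_eq_zero_iff_mem_span (φ₁ := phiOne K) (φ₂ := mk a)
    (by simp [coeff_phiOne]) (by simp [coeff_phiOne]) (by simp [h0]) (by simp [h1])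
  have hsupp : ∀ y, odeOp (odeGamma (phiOne K) (mk a)) (odeBeta (phiOne K) (mk a)) y = 0 →
      y ≠ 0 → ∃ j : ℕ, {i | coeff i y ≠ 0} = {j}ᶜ := by
    intro y hy hy0
    obtain ⟨c, d, rfl⟩ := Submodule.mem_span_pair.mp ((hsol y).mp hy)
    refine exists_setOf_coeff_ne_zero_eq_compl_singleton a h0 h1 hne hex ?_
    by_contra! hcd
    simp [hcd] at hy0
  refine ⟨odeGamma (phiOne K) (mk a), odeBeta (phiOne K) (mk a), ?_⟩
  simp only [Dser_eq_derivative, ← odeOp_apply]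
  refine ⟨hsol, Set.eq_univ_of_forall fun i => ?_, hsupp, fun y hy huniv => ?_⟩
  · by_cases hi : i = 1
    · simp [hi, h1]
    · simp [coeff_phiOne, hi]
  · by_cases hy0 : y = 0
    · exact Set.empty_ne_univ (by simpa [hy0] using huniv)
    · obtain ⟨j, hj⟩ := hsupp y hy hy0
      simpa [hj] using congrArg (j ∈ ·) huniv
end
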